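/- Let (Ω, P) be a probability space and let X : Fin 2 × Fin 2 → Fin N → Ω → ℝ be a mutually independent family of random variables, each taking values in {−1, 1}, such that for each (i,j) all N variables X (i,j) k have common mean μ(i,j). Let S = μ(0,0) + μ(1,0) + μ(0,1) − μ(1,1) and let S̄ be the random variable S̄ = m(0,0) + m(1,0) + m(0,1) − m(1,1), where m(i,j) = (1/N) ∑ₖ X (i,j) k. Then the variance of S̄ satisfies Var[S̄] ≤ (4 − S²/4)/N. -/

import Mathlib

/-!
`S̄` is a weighted sum `∑ ± X (i,j) k / N` of `4N` independent `±1`-valued variables, and each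
summand has variance `(1 - μ(i,j)²) / N²`, so `Var[S̄] = (4 - ∑ μ(i,j)²) / N`. Cauchy–Schwarz
against the sign vector `(1, 1, 1, -1)` gives `S² ≤ 4 ∑ μ(i,j)²`.
-/

open MeasureTheory ProbabilityTheory Finset

noncomputable section

/-- Empirical mean `m(i,j) = (1/N) ∑ₖ X (i,j) k`. -/
def empMean {Ω : Type*} {N : ℕ} (X : Fin 2 × Fin 2 → Fin N → Ω → ℝ)
    (ij : Fin 2 × Fin 2) (ω : Ω) : ℝ :=
  (1 / N) * ∑ k, X ij k ω

/-- Empirical CHSH estimate `S̄ = m(0,0) + m(1,0) + m(0,1) − m(1,1)`. -/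
def SbarEmp {Ω : Type*} {N : ℕ} (X : Fin 2 × Fin 2 → Fin N → Ω → ℝ) (ω : Ω) : ℝ :=
  empMean X (0, 0) ω + empMean X (1, 0) ω + empMean X (0, 1) ω - empMean X (1, 1) ω

/-- True CHSH value `S = μ(0,0) + μ(1,0) + μ(0,1) − μ(1,1)`. -/
def Strue (μ : Fin 2 × Fin 2 → ℝ) : ℝ := μ (0, 0) + μ (1, 0) + μ (0, 1) - μ (1, 1)

end

section

variable {Ω : Type*} [MeasurableSpace Ω] {P : Measure Ω}

lemma memLp_two_of_sq_eq_one [IsFiniteMeasure P] {X : Ω → ℝ} (hX : Measurable X)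
    (hsq : ∀ ω, X ω ^ 2 = 1) : MemLp X 2 P :=
  MemLp.of_bound hX.aestronglyMeasurable 1 <| ae_of_all _ fun ω => by
    simpa only [Real.norm_eq_abs, sq_le_one_iff_abs_le_one] using (hsq ω).le

lemma variance_eq_one_sub_sq_of_sq_eq_one [IsProbabilityMeasure P] {X : Ω → ℝ}
    (hX : Measurable X) (hsq : ∀ ω, X ω ^ 2 = 1) : variance X P = 1 - (∫ ω, X ω ∂P) ^ 2 := by
  rw [variance_eq_sub (memLp_two_of_sq_eq_one hX hsq)]
  simp [hsq]

lemma ProbabilityTheory.iIndepFun.variance_sum_const_mul {ι : Type*} [Fintype ι] {Y : ι → Ω → ℝ}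
    (hindep : iIndepFun Y P) (hY : ∀ i, MemLp (Y i) 2 P) (c : ι → ℝ) :
    variance (∑ i, fun ω => c i * Y i ω) P = ∑ i, c i ^ 2 * variance (Y i) P := by
  rw [IndepFun.variance_sum (fun i _ => (hY i).const_mul (c i)) fun i _ j _ hij =>
    (hindep.indepFun hij).comp (measurable_const_mul _) (measurable_const_mul _)]
  simp only [variance_const_mul]

end

def chshSign (ij : Fin 2 × Fin 2) : ℝ := if ij = (1, 1) then -1 else 1

lemma chshSign_sq (ij : Fin 2 × Fin 2) : chshSign ij ^ 2 = 1 := by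
  unfold chshSign; split_ifs <;> norm_num

lemma Strue_eq_sum (μ : Fin 2 × Fin 2 → ℝ) : Strue μ = ∑ ij, chshSign ij * μ ij := by
  simp only [Strue, chshSign, ite_mul, neg_mul, one_mul, Fintype.sum_prod_type, Prod.mk.injEq,
    Fin.sum_univ_two, zero_ne_one, and_false, ↓reduceIte, and_true]
  ring

lemma sq_Strue_le (μ : Fin 2 × Fin 2 → ℝ) : Strue μ ^ 2 ≤ 4 * ∑ ij, μ ij ^ 2 := by
  calc Strue μ ^ 2 ≤ (∑ ij, chshSign ij ^ 2) * ∑ ij, μ ij ^ 2 := by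
        rw [Strue_eq_sum]; exact sum_mul_sq_le_sq_mul_sq _ _ _
    _ = 4 * ∑ ij, μ ij ^ 2 := by simp [chshSign_sq]

lemma SbarEmp_eq_sum {Ω : Type*} {N : ℕ} (X : Fin 2 × Fin 2 → Fin N → Ω → ℝ) :
    SbarEmp X = ∑ p : (Fin 2 × Fin 2) × Fin N, fun ω => chshSign p.1 / N * X p.1 p.2 ω := by
  ext ω
  simp only [SbarEmp, empMean, div_eq_mul_inv, one_mul, mul_sum, chshSign, ite_mul, neg_mul,
    Finset.sum_apply, Fintype.sum_prod_type, sum_ite_irrel, sum_neg_distrib, Prod.mk.injEq,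
    Fin.sum_univ_two, zero_ne_one, and_false, ↓reduceIte, and_true]
  ring

lemma variance_SbarEmp {Ω : Type*} [MeasurableSpace Ω] {P : Measure Ω} [IsProbabilityMeasure P]
    {N : ℕ} {X : Fin 2 × Fin 2 → Fin N → Ω → ℝ} (hmeas : ∀ ij k, Measurable (X ij k))
    (hindep : iIndepFun (fun p : (Fin 2 × Fin 2) × Fin N => X p.1 p.2) P)
    (hsq : ∀ ij k ω, X ij k ω ^ 2 = 1) {μ : Fin 2 × Fin 2 → ℝ}
    (hmean : ∀ ij k, ∫ ω, X ij k ω ∂P = μ ij) :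
    variance (SbarEmp X) P = (4 - ∑ ij, μ ij ^ 2) / N := by
  have hN : (N : ℝ) * (1 / N ^ 2) = 1 / N := by rw [sq, mul_one_div, div_self_mul_self', one_div]
  rw [SbarEmp_eq_sum, hindep.variance_sum_const_mul
    (fun p => memLp_two_of_sq_eq_one (hmeas _ _) (hsq _ _)), Fintype.sum_prod_type]
  simp only [div_pow, chshSign_sq, variance_eq_one_sub_sq_of_sq_eq_one (hmeas _ _) (hsq _ _),
    hmean, sum_const, card_univ, Fintype.card_fin, nsmul_eq_mul, ← mul_assoc, hN, ← mul_sum,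
    sum_sub_distrib, Fintype.card_prod]
  push_cast
  ring

theorem variance_of_chsh_estimate_general {Ω : Type*} [MeasurableSpace Ω]
    (P : Measure Ω) [IsProbabilityMeasure P] (N : ℕ)
    (X : Fin 2 × Fin 2 → Fin N → Ω → ℝ)
    (hmeas : ∀ ij k, Measurable (X ij k))
    (hindep : iIndepFun (m := fun _ : (Fin 2 × Fin 2) × Fin N => (inferInstance : MeasurableSpace ℝ))
      (fun p => X p.1 p.2) P)
    (hval : ∀ ij k ω, X ij k ω = 1 ∨ X ij k ω = -1)
    (μ : Fin 2 × Fin 2 → ℝ)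
    (hmean : ∀ ij k, ∫ ω, X ij k ω ∂P = μ ij) :
    variance (SbarEmp X) P ≤ (4 - (Strue μ) ^ 2 / 4) / N := by
  rw [variance_SbarEmp hmeas hindep (fun ij k ω => sq_eq_one_iff.mpr (hval ij k ω)) hmean]
  gcongr
  linarith [sq_Strue_le μ]

/-- Variance bound for the empirical CHSH estimate: for a mutually independent family of
±1-valued random variables with common mean `μ(i,j)` in each group,
`Var[S̄] ≤ (4 − S²/4)/N`. -/
theorem variance_of_chsh_estimate {Ω : Type*} [MeasurableSpace Ω]
    (P : Measure Ω) [IsProbabilityMeasure P] (N : ℕ) (hN : 0 < N)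
    (X : Fin 2 × Fin 2 → Fin N → Ω → ℝ)
    (hmeas : ∀ ij k, Measurable (X ij k))
    (hindep : iIndepFun (m := fun _ : (Fin 2 × Fin 2) × Fin N => (inferInstance : MeasurableSpace ℝ))
      (fun p => X p.1 p.2) P)
    (hval : ∀ ij k ω, X ij k ω = 1 ∨ X ij k ω = -1)
    (μ : Fin 2 × Fin 2 → ℝ)
    (hmean : ∀ ij k, ∫ ω, X ij k ω ∂P = μ ij) :
    variance (SbarEmp X) P ≤ (4 - (Strue μ) ^ 2 / 4) / N :=
  variance_of_chsh_estimate_general P N X hmeas hindep hval μ hmean
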